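/- arXiv:0903.0307 — 4 statements merged into one kernel-verified Lean document; each statement's English description precedes it below -/
import Mathlib

section
/- Let P(ū, ȳ) = 2^{−N} ∏_{i=0}^{N−1} P(u_i | u₀^{i−1}, ȳ) and let Q(ū, ȳ) = 2^{−N} ∏_{i=0}^{N−1} Q(u_i | u₀^{i−1}, ȳ), where Q(u_i | u₀^{i−1}, ȳ) = 1/2 for i ∈ F and Q(u_i | u₀^{i−1}, ȳ) = P(u_i | u₀^{i−1}, ȳ) for i ∉ F. Then the total variation distance satisfies Σ_{ū,ȳ} |Q(ū,ȳ) − P(ū,ȳ)| ≤ 2 Σ_{i∈F} Σ_{ȳ} 2^{−N} Σ_{u₀^{i−1}} (∏_{j=0}^{i−1} P(u_j | u₀^{j−1}, ȳ)) · |1/2 − P(0 | u₀^{i−1}, ȳ)|. -/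
open Finset

noncomputable section

/-- The polarization kernel `G₂ = [[1,0],[1,1]]` over GF(2). -/
def G2 : Matrix (Fin 2) (Fin 2) (ZMod 2) := !![1, 0; 1, 1]

/-- Index identification `Fin 2 × Fin (2^n) ≃ Fin (2^(n+1))`. -/
def finPowEquiv (n : ℕ) : Fin 2 × Fin (2 ^ n) ≃ Fin (2 ^ (n + 1)) :=
  finProdFinEquiv.trans (finCongr (by rw [pow_succ]; ring))

/-- The `n`-fold Kronecker power `G₂^{⊗n}` over GF(2). -/
def kronPow : (n : ℕ) → Matrix (Fin (2 ^ n)) (Fin (2 ^ n)) (ZMod 2)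
  | 0 => 1
  | n + 1 => Matrix.reindex (finPowEquiv n) (finPowEquiv n)
      (Matrix.kroneckerMap (· * ·) G2 (kronPow n))

/-- Reversal of the `n`-bit binary expansion of `i`. -/
def bitRevNat (n i : ℕ) : ℕ :=
  ∑ k ∈ Finset.range n, if Nat.testBit i (n - 1 - k) then 2 ^ k else 0

lemma sum_range_two_pow_lt (n : ℕ) : ∑ k ∈ Finset.range n, 2 ^ k < 2 ^ n := by
  induction n with
  | zero => simp
  | succ m ih => rw [Finset.sum_range_succ, pow_succ]; omega

lemma bitRevNat_lt (n i : ℕ) : bitRevNat n i < 2 ^ n := by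
  have h1 : bitRevNat n i ≤ ∑ k ∈ Finset.range n, 2 ^ k :=
    Finset.sum_le_sum (fun k _ => by split <;> simp)
  have h2 := sum_range_two_pow_lt n
  omega

/-- The bit-reversal permutation matrix `Aₙ`. -/
def bitRevMatrix (n : ℕ) : Matrix (Fin (2 ^ n)) (Fin (2 ^ n)) (ZMod 2) :=
  fun i j => if (j : ℕ) = bitRevNat n (i : ℕ) then 1 else 0

/-- The polar transform matrix `Hₙ = Aₙ G₂^{⊗n}`. -/
def polarH (n : ℕ) : Matrix (Fin (2 ^ n)) (Fin (2 ^ n)) (ZMod 2) :=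
  bitRevMatrix n * kronPow n

/-- BSC(D) transition probability `W(y∣x)`. -/
def bsc (D : ℝ) (y x : ZMod 2) : ℝ := if y = x then 1 - D else D

/-- The polar transform `x̄ = ū Hₙ` of a word `ū`. -/
def polarEnc (n : ℕ) (u : Fin (2 ^ n) → ZMod 2) : Fin (2 ^ n) → ZMod 2 :=
  Matrix.vecMul u (polarH n)

/-- `W^{(i)}(ȳ, u₀^{i−1} ∣ u_i)`; it depends on `u` only through coordinates `≤ i`,
the coordinates `> i` being summed out. -/
def Wi (D : ℝ) (n : ℕ) (y : Fin (2 ^ n) → ZMod 2) (i : Fin (2 ^ n))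
    (u : Fin (2 ^ n) → ZMod 2) : ℝ :=
  ((2 : ℝ) ^ (2 ^ n - 1))⁻¹ *
    ∑ v ∈ Finset.univ.filter (fun v : Fin (2 ^ n) → ZMod 2 => ∀ j, j ≤ i → v j = u j),
      ∏ j, bsc D (y j) (polarEnc n v j)

/-- The posterior `P(u_i ∣ u₀^{i−1}, ȳ)`. -/
def post (D : ℝ) (n : ℕ) (y : Fin (2 ^ n) → ZMod 2) (i : Fin (2 ^ n))
    (u : Fin (2 ^ n) → ZMod 2) : ℝ :=
  Wi D n y i u /
    (Wi D n y i (Function.update u i 0) + Wi D n y i (Function.update u i 1))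

/-- The joint distribution `P(ū, ȳ) = 2^{−N} ∏_i P(u_i ∣ u₀^{i−1}, ȳ)`. -/
def Pfull (D : ℝ) (n : ℕ) (u y : Fin (2 ^ n) → ZMod 2) : ℝ :=
  ((2 : ℝ) ^ (2 ^ n))⁻¹ * ∏ i, post D n y i u

/-- The joint distribution `Q(ū, ȳ)` in which the frozen coordinates `i ∈ F` are replaced
by fair coin flips. -/
def Qfull (D : ℝ) (n : ℕ) (F : Finset (Fin (2 ^ n))) (u y : Fin (2 ^ n) → ZMod 2) : ℝ :=
  ((2 : ℝ) ^ (2 ^ n))⁻¹ * ∏ i, (if i ∈ F then (1 / 2 : ℝ) else post D n y i u)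

/-- `E_P[ |1/2 − P(0 ∣ U₀^{i−1}, Ȳ)| ]`: the expectation over `ȳ` (uniform) and over the
pasts `u₀^{i−1}` (weighted by `∏_{j<i} P(u_j ∣ u₀^{j−1}, ȳ)`); pasts are represented by the
words `u` whose coordinates `≥ i` vanish. -/
def frozenBias (D : ℝ) (n : ℕ) (i : Fin (2 ^ n)) : ℝ :=
  ∑ y : Fin (2 ^ n) → ZMod 2, ((2 : ℝ) ^ (2 ^ n))⁻¹ *
    ∑ u ∈ Finset.univ.filter (fun u : Fin (2 ^ n) → ZMod 2 => ∀ j, i ≤ j → u j = 0),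
      (∏ j ∈ Finset.univ.filter (fun j => j < i), post D n y j u) *
        |1 / 2 - post D n y i u|

/-!
Hybrid argument. `∏ Q_i - ∏ P_i` telescopes into
`∑ i, (Q_i - P_i) ∏_{j<i} P_j ∏_{j>i} Q_j`, and only frozen `i` contribute, with
`|Q_i - P_i| = |1/2 - P_i|`. In the sum over `ū` of the `i`-th term the conditionals `Q_j`,
`j > i`, integrate out to `1` one coordinate at a time, starting from the last, and the sum
over `u_i` gives a factor `2` because `|1/2 - P(u_i ∣ u₀^{i-1}, ȳ)|` does not depend on `u_i`.
-/

open Function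

theorem Finset.abs_prod_sub_prod_le {ι R : Type*} [LinearOrder ι] [CommRing R]
    [LinearOrder R] [IsStrictOrderedRing R] (s : Finset ι) (a b : ι → R)
    (ha : ∀ i ∈ s, 0 ≤ a i) (hb : ∀ i ∈ s, 0 ≤ b i) :
    |∏ i ∈ s, a i - ∏ i ∈ s, b i|
      ≤ ∑ i ∈ s, |a i - b i| *
          ((∏ j ∈ s with j < i, b j) * ∏ j ∈ s with i < j, a j) := by
  have htelescope := prod_add_ordered s a (fun i => b i - a i)
  simp only [add_sub_cancel] at htelescope
  rw [htelescope, sub_add_cancel_left, abs_neg]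
  refine (abs_sum_le_sum_abs _ _).trans (sum_le_sum fun i _ => ?_)
  have hprod : 0 ≤ (∏ j ∈ s with j < i, b j) * ∏ j ∈ s with i < j, a j :=
    mul_nonneg (prod_nonneg fun j hj => hb j (mem_filter.1 hj).1)
      (prod_nonneg fun j hj => ha j (mem_filter.1 hj).1)
  rw [mul_assoc, abs_mul, abs_sub_comm, abs_of_nonneg hprod]

section CausalKernel

variable {β : Type*} [Fintype β] [DecidableEq β] [Zero β] {N : ℕ}

variable (β N) in
def vanishingFrom (k : ℕ) : Finset (Fin N → β) :=
  {u : Fin N → β | ∀ j : Fin N, k ≤ (j : ℕ) → u j = 0}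

@[simp]
lemma mem_vanishingFrom {k : ℕ} {u : Fin N → β} :
    u ∈ vanishingFrom β N k ↔ ∀ j : Fin N, k ≤ (j : ℕ) → u j = 0 := by
  simp [vanishingFrom]

lemma vanishingFrom_of_le {k : ℕ} (hk : N ≤ k) : vanishingFrom β N k = univ :=
  filter_true_of_mem fun _ _ j hj => absurd (j.isLt.trans_le hk) hj.not_gt

lemma sum_vanishingFrom_succ {M : Type*} [AddCommMonoid M] {k : ℕ} (hk : k < N)
    (φ : (Fin N → β) → M) :
    ∑ u ∈ vanishingFrom β N (k + 1), φ u
      = ∑ u ∈ vanishingFrom β N k, ∑ b, φ (update u ⟨k, hk⟩ b) := by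
  rw [← sum_product']
  refine sum_nbij' (fun u => (update u ⟨k, hk⟩ 0, u ⟨k, hk⟩))
    (fun p => update p.1 ⟨k, hk⟩ p.2) ?_ ?_ ?_ ?_ ?_
  · intro u hu
    simp only [mem_product, mem_vanishingFrom, mem_univ, and_true] at hu ⊢
    intro j hj
    rcases eq_or_ne j ⟨k, hk⟩ with rfl | hne
    · exact update_self ..
    · rw [update_of_ne hne]
      exact hu j (by have := Fin.val_ne_of_ne hne; simp only at this; omega)
  · rintro ⟨u, b⟩ hu
    simp only [mem_product, mem_vanishingFrom, mem_univ, and_true] at hu ⊢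
    intro j hj
    rw [update_of_ne (by rintro rfl; simp at hj)]
    exact hu j (by omega)
  · intro u _
    simp
  · rintro ⟨u, b⟩ hu
    simp only [mem_product, mem_vanishingFrom, mem_univ, and_true] at hu
    simp [← hu ⟨k, hk⟩ le_rfl]
  · intro u _
    simp

/-- `c j u` plays the role of the conditional probability of the letter `u j` given
`u 0, …, u (j - 1)`. -/
structure IsCausalKernel (c : Fin N → (Fin N → β) → ℝ) : Prop where
  dependsOn : ∀ j, DependsOn (c j) (Set.Iic j)
  sum_update : ∀ j u, ∑ b, c j (update u j b) = 1

theorem IsCausalKernel.sum_prod_mul {c : Fin N → (Fin N → β) → ℝ} (hc : IsCausalKernel c)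
    {k : ℕ} (hk : k ≤ N) {g : (Fin N → β) → ℝ} (hg : DependsOn g {t | (t : ℕ) < k}) :
    ∑ u, (∏ j ∈ univ.filter (fun j : Fin N => k ≤ j), c j u) * g u
      = ∑ u ∈ vanishingFrom β N k, g u := by
  obtain ⟨d, hd⟩ := Nat.exists_eq_add_of_le hk
  induction d generalizing k g with
  | zero =>
    have hempty : univ.filter (fun j : Fin N => k ≤ j) = ∅ :=
      filter_false_of_mem fun j _ => by have := j.isLt; omega
    rw [vanishingFrom_of_le (show N ≤ k by omega)]
    simp [hempty]
  | succ d ih =>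
    have hkN : k < N := by omega
    set m : Fin N := ⟨k, hkN⟩
    have hsplit : univ.filter (fun j : Fin N => k ≤ j)
        = insert m (univ.filter (fun j : Fin N => k + 1 ≤ j)) := by
      ext j
      simp only [mem_filter, mem_univ, true_and, mem_insert, m, Fin.ext_iff]
      omega
    have hm : m ∉ univ.filter (fun j : Fin N => k + 1 ≤ j) := by simp [m]
    have hcg : DependsOn (fun u => c m u * g u) {t : Fin N | (t : ℕ) < k + 1} := by
      intro u v huv
      dsimp only
      rw [hc.dependsOn m fun t ht => huv t (Nat.lt_succ_of_le ht),
        hg fun t ht => huv t (Nat.lt_succ_of_lt ht)]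
    calc ∑ u, (∏ j ∈ univ.filter (fun j : Fin N => k ≤ j), c j u) * g u
        = ∑ u, (∏ j ∈ univ.filter (fun j : Fin N => k + 1 ≤ j), c j u) * (c m u * g u) := by
          simp only [hsplit, prod_insert hm]
          exact sum_congr rfl fun u _ => by ring
      _ = ∑ u ∈ vanishingFrom β N (k + 1), c m u * g u := ih hkN hcg (by omega)
      _ = ∑ u ∈ vanishingFrom β N k, ∑ b, c m (update u m b) * g (update u m b) :=
          sum_vanishingFrom_succ hkN _
      _ = ∑ u ∈ vanishingFrom β N k, g u := by
          refine sum_congr rfl fun u _ => ?_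
          have hgu : ∀ b, g (update u m b) = g u := fun b =>
            hg fun t ht => update_of_ne (Fin.ne_of_lt ht) _ _
          simp only [hgu, ← sum_mul, hc.sum_update, one_mul]

end CausalKernel

section Posterior

variable {D : ℝ} {n : ℕ}

lemma Wi_pos (hD0 : 0 < D) (hD1 : D < 1) (y : Fin (2 ^ n) → ZMod 2) (i : Fin (2 ^ n))
    (u : Fin (2 ^ n) → ZMod 2) : 0 < Wi D n y i u := by
  refine mul_pos (by positivity) (sum_pos (fun v _ => prod_pos fun j _ => ?_) ⟨u, by simp⟩)
  unfold bsc
  split <;> linarith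

lemma Wi_dependsOn (y : Fin (2 ^ n) → ZMod 2) (i : Fin (2 ^ n)) :
    DependsOn (Wi D n y i) (Set.Iic i) := by
  intro u u' h
  unfold Wi
  congr 2
  exact filter_congr fun v _ => forall₂_congr fun j hj => by rw [h j hj]

lemma post_dependsOn (y : Fin (2 ^ n) → ZMod 2) (i : Fin (2 ^ n)) :
    DependsOn (post D n y i) (Set.Iic i) := by
  intro u u' h
  have hupd : ∀ b, ∀ j ∈ Set.Iic i, update u i b j = update u' i b j := fun b j hj => by
    rcases eq_or_ne j i with rfl | hne
    · simp
    · simp only [update_of_ne hne, h j hj]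
  unfold post
  rw [Wi_dependsOn y i h, Wi_dependsOn y i (hupd 0), Wi_dependsOn y i (hupd 1)]

lemma post_nonneg (hD0 : 0 < D) (hD1 : D < 1) (y : Fin (2 ^ n) → ZMod 2) (i : Fin (2 ^ n))
    (u : Fin (2 ^ n) → ZMod 2) : 0 ≤ post D n y i u :=
  div_nonneg (Wi_pos hD0 hD1 y i u).le
    (add_pos (Wi_pos hD0 hD1 y i _) (Wi_pos hD0 hD1 y i _)).le

lemma post_update_zero_add_post_update_one (hD0 : 0 < D) (hD1 : D < 1)
    (y : Fin (2 ^ n) → ZMod 2) (i : Fin (2 ^ n)) (u : Fin (2 ^ n) → ZMod 2) :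
    post D n y i (update u i 0) + post D n y i (update u i 1) = 1 := by
  unfold post
  simp only [update_idem]
  rw [← add_div, div_self (add_pos (Wi_pos hD0 hD1 y i _) (Wi_pos hD0 hD1 y i _)).ne']

lemma abs_half_sub_post_update (hD0 : 0 < D) (hD1 : D < 1) (y : Fin (2 ^ n) → ZMod 2)
    (i : Fin (2 ^ n)) (u : Fin (2 ^ n) → ZMod 2) (b : ZMod 2) :
    |1 / 2 - post D n y i (update u i b)| = |1 / 2 - post D n y i (update u i 0)| := by
  obtain rfl | rfl : b = 0 ∨ b = 1 := by revert b; decide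
  · rfl
  · have hsum := post_update_zero_add_post_update_one hD0 hD1 y i u
    rw [show post D n y i (update u i 1) = 1 - post D n y i (update u i 0) by linarith,
      ← abs_neg]
    ring_nf

end Posterior

def postQ (D : ℝ) (n : ℕ) (F : Finset (Fin (2 ^ n))) (y : Fin (2 ^ n) → ZMod 2)
    (i : Fin (2 ^ n)) (u : Fin (2 ^ n) → ZMod 2) : ℝ :=
  if i ∈ F then 1 / 2 else post D n y i u

section FrozenCoordinates

variable {D : ℝ} {n : ℕ}

lemma isCausalKernel_postQ (hD0 : 0 < D) (hD1 : D < 1) (F : Finset (Fin (2 ^ n)))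
    (y : Fin (2 ^ n) → ZMod 2) : IsCausalKernel (postQ D n F y) where
  dependsOn i := by
    by_cases hi : i ∈ F
    · exact fun _ _ _ => by simp only [postQ, if_pos hi]
    · have hpost : postQ D n F y i = post D n y i := funext fun _ => if_neg hi
      exact hpost ▸ post_dependsOn y i
  sum_update i u := by
    refine (Fin.sum_univ_two fun b : ZMod 2 => postQ D n F y i (update u i b)).trans ?_
    unfold postQ
    split_ifs
    · norm_num
    · exact post_update_zero_add_post_update_one hD0 hD1 y i u

lemma postQ_nonneg (hD0 : 0 < D) (hD1 : D < 1) (F : Finset (Fin (2 ^ n)))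
    (y : Fin (2 ^ n) → ZMod 2) (i : Fin (2 ^ n)) (u : Fin (2 ^ n) → ZMod 2) :
    0 ≤ postQ D n F y i u := by
  unfold postQ
  split_ifs
  · norm_num
  · exact post_nonneg hD0 hD1 y i u

lemma abs_Qfull_sub_Pfull_le (hD0 : 0 < D) (hD1 : D < 1) (F : Finset (Fin (2 ^ n)))
    (u y : Fin (2 ^ n) → ZMod 2) :
    |Qfull D n F u y - Pfull D n u y|
      ≤ ((2 : ℝ) ^ (2 ^ n))⁻¹ * ∑ i ∈ F, |1 / 2 - post D n y i u| *
          ((∏ j ∈ univ with j < i, post D n y j u) *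
            ∏ j ∈ univ with i < j, postQ D n F y j u) := by
  have hbound := abs_prod_sub_prod_le univ (fun i => postQ D n F y i u) (fun i => post D n y i u)
    (fun i _ => postQ_nonneg hD0 hD1 F y i u) (fun i _ => post_nonneg hD0 hD1 y i u)
  rw [← sum_subset (subset_univ F) fun i _ hi => by simp [postQ, hi]] at hbound
  rw [Qfull, Pfull, ← mul_sub, abs_mul, abs_of_pos (by positivity)]
  refine mul_le_mul_of_nonneg_left (hbound.trans_eq (sum_congr rfl fun i hi => ?_)) (by positivity)
  simp only [postQ, if_pos hi]

lemma sum_abs_half_sub_post_mul_prod (hD0 : 0 < D) (hD1 : D < 1)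
    (F : Finset (Fin (2 ^ n))) (y : Fin (2 ^ n) → ZMod 2) (i : Fin (2 ^ n)) :
    ∑ u, |1 / 2 - post D n y i u| *
        ((∏ j ∈ univ with j < i, post D n y j u) * ∏ j ∈ univ with i < j, postQ D n F y j u)
      = 2 * ∑ u ∈ univ.filter (fun u : Fin (2 ^ n) → ZMod 2 => ∀ j, i ≤ j → u j = 0),
          (∏ j ∈ univ.filter (fun j => j < i), post D n y j u) * |1 / 2 - post D n y i u| := by
  set g : (Fin (2 ^ n) → ZMod 2) → ℝ :=
    fun u => (∏ j ∈ univ with j < i, post D n y j u) * |1 / 2 - post D n y i u|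
  have hg : DependsOn g {t : Fin (2 ^ n) | (t : ℕ) < i + 1} := by
    intro u v h
    have hpost : ∀ j ≤ i, post D n y j u = post D n y j v := fun j hj =>
      post_dependsOn y j fun t ht => h t (Nat.lt_succ_of_le (ht.trans hj))
    simp only [g, hpost i le_rfl]
    rw [prod_congr rfl fun j hj => hpost j (mem_filter.1 hj).2.le]
  have hgu : ∀ u ∈ vanishingFrom (ZMod 2) (2 ^ n) i, ∀ b, g (update u i b) = g u := by
    intro u hu b
    have hui : update u i 0 = u := update_eq_self_iff.2 (mem_vanishingFrom.1 hu i le_rfl).symm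
    have hprod : ∀ j ∈ univ.filter (· < i), post D n y j (update u i b) = post D n y j u :=
      fun j hj => post_dependsOn y j fun t (ht : t ≤ j) =>
        update_of_ne (ht.trans_lt (mem_filter.1 hj).2).ne _ _
    simp only [g, abs_half_sub_post_update hD0 hD1 y i u b, hui, prod_congr rfl hprod]
  have hfilter :
      univ.filter (fun j => i < j) = univ.filter (fun j : Fin (2 ^ n) => (i : ℕ) + 1 ≤ j) := rfl
  calc ∑ u, |1 / 2 - post D n y i u| *
        ((∏ j ∈ univ with j < i, post D n y j u) * ∏ j ∈ univ with i < j, postQ D n F y j u)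
      = ∑ u, (∏ j ∈ univ.filter (fun j : Fin (2 ^ n) => (i : ℕ) + 1 ≤ j),
          postQ D n F y j u) * g u :=
        sum_congr rfl fun u _ => by rw [hfilter]; ring
    _ = ∑ u ∈ vanishingFrom (ZMod 2) (2 ^ n) (i + 1), g u :=
        (isCausalKernel_postQ hD0 hD1 F y).sum_prod_mul i.isLt hg
    _ = ∑ u ∈ vanishingFrom (ZMod 2) (2 ^ n) i, ∑ b, g (update u i b) :=
        sum_vanishingFrom_succ i.isLt g
    _ = 2 * ∑ u ∈ vanishingFrom (ZMod 2) (2 ^ n) i, g u := by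
        rw [mul_sum]
        refine sum_congr rfl fun u hu => ?_
        simp [hgu u hu, ZMod.card]

end FrozenCoordinates

/-- **Bound on the total variation distance** between `Q` and `P`. -/
theorem total_variation_bound (D : ℝ) (hD0 : 0 < D) (hD1 : D < 1)
    (n : ℕ) (F : Finset (Fin (2 ^ n))) :
    ∑ u : Fin (2 ^ n) → ZMod 2, ∑ y : Fin (2 ^ n) → ZMod 2,
        |Qfull D n F u y - Pfull D n u y|
      ≤ 2 * ∑ i ∈ F, frozenBias D n i := by
  calc ∑ u, ∑ y, |Qfull D n F u y - Pfull D n u y|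
      ≤ ∑ u, ∑ y, ((2 : ℝ) ^ (2 ^ n))⁻¹ * ∑ i ∈ F, |1 / 2 - post D n y i u| *
          ((∏ j ∈ univ with j < i, post D n y j u) *
            ∏ j ∈ univ with i < j, postQ D n F y j u) :=
        sum_le_sum fun u _ => sum_le_sum fun y _ => abs_Qfull_sub_Pfull_le hD0 hD1 F u y
    _ = ∑ i ∈ F, ∑ y, ((2 : ℝ) ^ (2 ^ n))⁻¹ * ∑ u, |1 / 2 - post D n y i u| *
          ((∏ j ∈ univ with j < i, post D n y j u) *
            ∏ j ∈ univ with i < j, postQ D n F y j u) := by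
        simp_rw [mul_sum]
        rw [sum_comm]
        exact (sum_congr rfl fun y _ => sum_comm).trans sum_comm
    _ = ∑ i ∈ F, 2 * frozenBias D n i := sum_congr rfl fun i _ => by
        simp_rw [sum_abs_half_sub_post_mul_prod hD0 hD1 F, frozenBias, mul_sum, mul_left_comm]
    _ = 2 * ∑ i ∈ F, frozenBias D n i := (mul_sum ..).symm
end
end

section
/- Let V be a finite set and K : {0,1} → V → ℝ a binary-input channel with K(v|b) ≥ 0 and Σ_{v∈V} K(v|b) = 1 for b ∈ {0,1}. Let Z = Σ_{v∈V} √(K(v|0)·K(v|1)) be its Bhattacharyya parameter, and for v with K(v|0)+K(v|1) > 0 let π(v) = K(v|0)/(K(v|0)+K(v|1)) be the posterior probability of input 0 given output v under the uniform prior. If Z ≥ 1 − 2δ² for some δ ≥ 0, then Σ_{v∈V} ((K(v|0)+K(v|1))/2) · |1/2 − π(v)| ≤ δ, where terms with K(v|0)+K(v|1) = 0 are taken to be 0. -/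
/-!
Each term of the sum is `|K(v|0) - K(v|1)| / 4`, so the claim bounds the total variation
distance of the two rows by the Bhattacharyya coefficient `Z`. Writing
`|p - q| = |√p - √q| (√p + √q)` and applying Cauchy–Schwarz gives Le Cam's inequality
`(Σ |p - q|)² ≤ (2 - 2Z)(2 + 2Z) = 4(1 - Z²)`, and `1 - Z² ≤ 2(1 - Z) ≤ 4δ²` since `Z ≤ 1`.
-/

open Finset Real

noncomputable def bhattacharyya {ι : Type*} [Fintype ι] (p q : ι → ℝ) : ℝ :=
  ∑ i, √(p i * q i)

section Pointwise

variable {a b : ℝ}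

lemma abs_sub_eq_abs_sqrt_sub_mul_sqrt_add (ha : 0 ≤ a) (hb : 0 ≤ b) :
    |a - b| = |√a - √b| * (√a + √b) := by
  rw [← abs_of_nonneg (by positivity : 0 ≤ √a + √b), ← abs_mul, mul_comm, ← sq_sub_sq,
    sq_sqrt ha, sq_sqrt hb]

lemma sqrt_sub_sqrt_sq (ha : 0 ≤ a) (hb : 0 ≤ b) :
    (√a - √b) ^ 2 = a + b - 2 * √(a * b) := by
  rw [sub_sq, sqrt_mul ha, sq_sqrt ha, sq_sqrt hb]
  ring

lemma sqrt_add_sqrt_sq (ha : 0 ≤ a) (hb : 0 ≤ b) :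
    (√a + √b) ^ 2 = a + b + 2 * √(a * b) := by
  rw [add_sq, sqrt_mul ha, sq_sqrt ha, sq_sqrt hb]
  ring

lemma add_div_two_mul_abs_half_sub_div_add (ha : 0 ≤ a) (hb : 0 ≤ b) :
    (a + b) / 2 * |1 / 2 - a / (a + b)| = |a - b| / 4 := by
  rcases (add_nonneg ha hb).eq_or_lt with hab | hab
  · obtain ⟨rfl, rfl⟩ : a = 0 ∧ b = 0 := ⟨by linarith, by linarith⟩
    simp
  · have : 1 / 2 - a / (a + b) = (b - a) / (2 * (a + b)) := by
      field_simp
      ring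
    rw [this, abs_div, abs_sub_comm, abs_of_pos (by positivity : 0 < 2 * (a + b))]
    field_simp
    ring

end Pointwise

section Bhattacharyya

variable {ι : Type*} [Fintype ι] {p q : ι → ℝ}

lemma bhattacharyya_le_one (hp : ∀ i, 0 ≤ p i) (hq : ∀ i, 0 ≤ q i)
    (hp₁ : ∑ i, p i = 1) (hq₁ : ∑ i, q i = 1) : bhattacharyya p q ≤ 1 := by
  have := sum_sqrt_mul_sqrt_le univ hp hq
  simpa only [bhattacharyya, ← sqrt_mul (hp _), hp₁, hq₁, sqrt_one, mul_one] using this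

theorem sq_sum_abs_sub_le (hp : ∀ i, 0 ≤ p i) (hq : ∀ i, 0 ≤ q i) :
    (∑ i, |p i - q i|) ^ 2 ≤ (∑ i, p i + ∑ i, q i) ^ 2 - 4 * bhattacharyya p q ^ 2 := by
  have hsub : ∑ i, (√(p i) - √(q i)) ^ 2 = ∑ i, p i + ∑ i, q i - 2 * bhattacharyya p q := by
    simp only [sqrt_sub_sqrt_sq (hp _) (hq _), sum_sub_distrib, sum_add_distrib,
      bhattacharyya, mul_sum]
  have hadd : ∑ i, (√(p i) + √(q i)) ^ 2 = ∑ i, p i + ∑ i, q i + 2 * bhattacharyya p q := by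
    simp only [sqrt_add_sqrt_sq (hp _) (hq _), sum_add_distrib, bhattacharyya, mul_sum]
  calc (∑ i, |p i - q i|) ^ 2
      = (∑ i, |√(p i) - √(q i)| * (√(p i) + √(q i))) ^ 2 := by
        simp only [abs_sub_eq_abs_sqrt_sub_mul_sqrt_add (hp _) (hq _)]
    _ ≤ (∑ i, |√(p i) - √(q i)| ^ 2) * ∑ i, (√(p i) + √(q i)) ^ 2 :=
        sum_mul_sq_le_sq_mul_sq _ _ _
    _ = _ := by
        simp only [sq_abs, hsub, hadd]
        ring

lemma sum_abs_sub_le_of_one_sub_two_mul_sq_le_bhattacharyya (hp : ∀ i, 0 ≤ p i)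
    (hq : ∀ i, 0 ≤ q i) (hp₁ : ∑ i, p i = 1) (hq₁ : ∑ i, q i = 1) {δ : ℝ} (hδ : 0 ≤ δ)
    (hZ : 1 - 2 * δ ^ 2 ≤ bhattacharyya p q) : ∑ i, |p i - q i| ≤ 4 * δ := by
  have hLeCam := sq_sum_abs_sub_le hp hq
  have hZ₁ := bhattacharyya_le_one hp hq hp₁ hq₁
  rw [hp₁, hq₁] at hLeCam
  refine abs_le_of_sq_le_sq' ?_ (by positivity) |>.2
  nlinarith

end Bhattacharyya

/-- **`Z` close to `1` is good.**  For a binary-input channel `K` with Bhattacharyya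
parameter `Z = Σ_v √(K(v|0)K(v|1)) ≥ 1 − 2δ²`, the expected distance of the posterior of the
input (under the uniform prior) from `1/2` is at most `δ`.  Here the output distribution is
`v ↦ (K(v|0)+K(v|1))/2` and the posterior of input `0` given `v` is `K(v|0)/(K(v|0)+K(v|1))`;
outputs with `K(v|0)+K(v|1) = 0` contribute `0` (as their weight vanishes). -/
theorem posterior_bias_of_bhattacharyya_close_to_one
    {V : Type*} [Fintype V] (K : ZMod 2 → V → ℝ)
    (hK : ∀ b v, 0 ≤ K b v) (hsum : ∀ b, ∑ v, K b v = 1)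
    (δ : ℝ) (hδ : 0 ≤ δ)
    (hZ : 1 - 2 * δ ^ 2 ≤ ∑ v, Real.sqrt (K 0 v * K 1 v)) :
    ∑ v, ((K 0 v + K 1 v) / 2) * |1 / 2 - K 0 v / (K 0 v + K 1 v)| ≤ δ := by
  have hTV : ∑ v, |K 0 v - K 1 v| ≤ 4 * δ :=
    sum_abs_sub_le_of_one_sub_two_mul_sq_le_bhattacharyya (hK 0) (hK 1) (hsum 0) (hsum 1) hδ hZ
  calc ∑ v, ((K 0 v + K 1 v) / 2) * |1 / 2 - K 0 v / (K 0 v + K 1 v)|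
      = (∑ v, |K 0 v - K 1 v|) / 4 := by
        rw [sum_div]
        exact sum_congr rfl fun v _ ↦ add_div_two_mul_abs_half_sub_div_add (hK 0 v) (hK 1 v)
    _ ≤ δ := by linarith
end

section
/- Let 0 < D < 1 and W be the BSC(D). Let ȳ, ȳ' ∈ {0,1}^N, set z̄ = (ȳ ⊕ ȳ')H_n^{−1}, and suppose u₀^{i−1} = u'₀^{i−1} ⊕ z₀^{i−1}. Then for every a ∈ {0,1}: W^{(i)}(ȳ, u₀^{i−1} | a) = W^{(i)}(ȳ', u'₀^{i−1} | a ⊕ z_i). Consequently, the likelihood ratio l_i(ȳ, u₀^{i−1}) = W^{(i)}(ȳ,u₀^{i−1}|0)/W^{(i)}(ȳ,u₀^{i−1}|1) satisfies l_i(ȳ, u₀^{i−1}) = l_i(ȳ', u'₀^{i−1}) if z_i = 0 and l_i(ȳ, u₀^{i−1}) = 1/l_i(ȳ', u'₀^{i−1}) if z_i = 1. -/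
open Finset

noncomputable section

/-!
The BSC is symmetric: flipping input and output together leaves `W` unchanged. Since
`ȳ' = ȳ ⊕ z̄Hₙ`, the substitution `v ↦ v ⊕ z̄` in the sum defining `W^{(i)}` turns the
`ȳ`-side into the `ȳ'`-side, with the past shifted by `z₀^{i−1}` and the input by `z_i`.
That `z̄Hₙ = ȳ ⊕ ȳ'` needs `Hₙ` invertible: `det G₂^{⊗n} = 1` and `Aₙ` is the permutation
matrix of the bit-reversal involution.
-/

lemma Nat.testBit_sum_two_pow (s : Finset ℕ) (j : ℕ) :
    (∑ k ∈ s, 2 ^ k).testBit j ↔ j ∈ s := by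
  conv_rhs => rw [← Finset.toFinset_bitIndices_sum_two_pow s]
  rw [List.mem_toFinset, Nat.mem_bitIndices]

lemma testBit_bitRevNat (n i j : ℕ) :
    (bitRevNat n i).testBit j ↔ j < n ∧ i.testBit (n - 1 - j) := by
  rw [bitRevNat, ← Finset.sum_filter, Nat.testBit_sum_two_pow, mem_filter, mem_range]

lemma bitRevNat_bitRevNat {n i : ℕ} (hi : i < 2 ^ n) : bitRevNat n (bitRevNat n i) = i := by
  refine Nat.eq_of_testBit_eq fun j => Bool.eq_iff_iff.2 ?_
  rw [testBit_bitRevNat, testBit_bitRevNat]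
  by_cases hj : j < n
  · have hrev : n - 1 - (n - 1 - j) = j := by omega
    simp [hj, hrev, show n - 1 - j < n by omega]
  · have hlt : i < 2 ^ j := hi.trans_le (Nat.pow_le_pow_right two_pos (by omega))
    simp [hj, Nat.testBit_eq_false_of_lt hlt]

def bitRevPerm (n : ℕ) : Equiv.Perm (Fin (2 ^ n)) :=
  Function.Involutive.toPerm (fun i => ⟨bitRevNat n i, bitRevNat_lt n i⟩)
    fun i => Fin.ext (bitRevNat_bitRevNat i.isLt)

lemma bitRevMatrix_eq_permMatrix (n : ℕ) :
    bitRevMatrix n = (bitRevPerm n).permMatrix (ZMod 2) := by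
  ext i j
  simp [bitRevMatrix, bitRevPerm, Function.Involutive.toPerm, Fin.ext_iff, eq_comm]

lemma det_kronPow (n : ℕ) : (kronPow n).det = 1 := by
  induction n with
  | zero => simp [kronPow]
  | succ m ih =>
    rw [kronPow, Matrix.det_reindex_self, Matrix.det_kronecker, ih]
    simp [G2, Matrix.det_fin_two_of]

lemma isUnit_det_polarH (n : ℕ) : IsUnit (polarH n).det := by
  rw [polarH, Matrix.det_mul, det_kronPow, mul_one, bitRevMatrix_eq_permMatrix,
    Matrix.det_permutation]
  exact (Equiv.Perm.sign _).isUnit.map (Int.castRingHom _)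

lemma polarEnc_add (n : ℕ) (u v : Fin (2 ^ n) → ZMod 2) :
    polarEnc n (u + v) = polarEnc n u + polarEnc n v :=
  Matrix.add_vecMul _ u v

lemma polarEnc_vecMul_inv (n : ℕ) (w : Fin (2 ^ n) → ZMod 2) :
    polarEnc n (Matrix.vecMul w (polarH n)⁻¹) = w := by
  rw [polarEnc, Matrix.vecMul_vecMul, Matrix.nonsing_inv_mul _ (isUnit_det_polarH n),
    Matrix.vecMul_one]

lemma bsc_add_add (D : ℝ) (y x e : ZMod 2) : bsc D (y + e) (x + e) = bsc D y x := by
  simp only [bsc, add_left_inj]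

lemma Wi_congr (D : ℝ) (n : ℕ) (y : Fin (2 ^ n) → ZMod 2) (i : Fin (2 ^ n))
    {u u' : Fin (2 ^ n) → ZMod 2} (h : ∀ j ≤ i, u j = u' j) :
    Wi D n y i u = Wi D n y i u' := by
  unfold Wi
  congr 2
  exact filter_congr fun v _ => forall₂_congr fun j hj => by rw [h j hj]

lemma Wi_add_polarEnc (D : ℝ) (n : ℕ) (y : Fin (2 ^ n) → ZMod 2) (i : Fin (2 ^ n))
    (u e : Fin (2 ^ n) → ZMod 2) :
    Wi D n (y + polarEnc n e) i (u + e) = Wi D n y i u := by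
  unfold Wi
  congr 1
  symm
  refine sum_equiv (Equiv.addRight e) (fun v => ?_) fun v _ => prod_congr rfl fun j _ => ?_
  · simp
  · simp [polarEnc_add, bsc_add_add]

theorem gauge_transformation_general (D : ℝ) (n : ℕ)
    (y y' u u' z : Fin (2 ^ n) → ZMod 2) (i : Fin (2 ^ n))
    (hz : z = Matrix.vecMul (y + y') (polarH n)⁻¹)
    (hu : ∀ j, j < i → u j = u' j + z j) :
    (∀ a : ZMod 2,
        Wi D n y i (Function.update u i a) = Wi D n y' i (Function.update u' i (a + z i))) ∧
    (z i = 0 →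
        Wi D n y i (Function.update u i 0) / Wi D n y i (Function.update u i 1)
          = Wi D n y' i (Function.update u' i 0) / Wi D n y' i (Function.update u' i 1)) ∧
    (z i = 1 →
        Wi D n y i (Function.update u i 0) / Wi D n y i (Function.update u i 1)
          = (Wi D n y' i (Function.update u' i 0) / Wi D n y' i (Function.update u' i 1))⁻¹) := by
  have hy' : y' = y + polarEnc n z := by
    rw [hz, polarEnc_vecMul_inv, ← add_assoc, CharTwo.add_self_eq_zero, zero_add]
  have hgauge (a : ZMod 2) :
      Wi D n y i (Function.update u i a) = Wi D n y' i (Function.update u' i (a + z i)) := by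
    rw [hy', ← Wi_add_polarEnc D n y i _ z]
    refine Wi_congr D n _ i fun j hj => ?_
    rcases hj.lt_or_eq with hj | rfl
    · simp [hj.ne, hu j hj, add_assoc, CharTwo.add_self_eq_zero]
    · simp
  refine ⟨hgauge, fun h0 => ?_, fun h1 => ?_⟩
  · rw [hgauge 0, hgauge 1, h0, add_zero, add_zero]
  · rw [hgauge 0, hgauge 1, h1, zero_add, show (1 + 1 : ZMod 2) = 0 from rfl, inv_div]

/-- **Gauge transformation.**  Let `z̄ = (ȳ ⊕ ȳ′)Hₙ⁻¹` and suppose the pasts are related by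
`u₀^{i−1} = u′₀^{i−1} ⊕ z₀^{i−1}`.  Then `W^{(i)}(ȳ, u₀^{i−1} ∣ a) =
W^{(i)}(ȳ′, u′₀^{i−1} ∣ a ⊕ z_i)` for every input `a`; consequently the likelihood ratio is
preserved if `z_i = 0` and inverted if `z_i = 1`.  (The word supplied to `Wi` carries the
past in its coordinates `< i` and the channel input in coordinate `i`.) -/
theorem gauge_transformation (D : ℝ) (hD0 : 0 < D) (hD1 : D < 1) (n : ℕ)
    (y y' u u' z : Fin (2 ^ n) → ZMod 2) (i : Fin (2 ^ n))
    (hz : z = Matrix.vecMul (y + y') (polarH n)⁻¹)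
    (hu : ∀ j, j < i → u j = u' j + z j) :
    (∀ a : ZMod 2,
        Wi D n y i (Function.update u i a) = Wi D n y' i (Function.update u' i (a + z i))) ∧
    (z i = 0 →
        Wi D n y i (Function.update u i 0) / Wi D n y i (Function.update u i 1)
          = Wi D n y' i (Function.update u' i 0) / Wi D n y' i (Function.update u' i 1)) ∧
    (z i = 1 →
        Wi D n y i (Function.update u i 0) / Wi D n y i (Function.update u i 1)
          = (Wi D n y' i (Function.update u' i 0) / Wi D n y' i (Function.update u' i 1))⁻¹) :=
  gauge_transformation_general D n y y' u u' z i hz hu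

end
end

section
/- Let Y be a finite set and W : {0,1} → Y → ℝ a binary-input discrete memoryless channel (nonnegative entries, rows summing to 1), with Bhattacharyya parameter Z(W) = Σ_{y∈Y} √(W(y|0)W(y|1)). Define the channel W⁺ : {0,1} → Y×Y×{0,1} → ℝ by W⁺(y₀, y₁, u₀ | u₁) = (1/2) W(y₀ | u₀ ⊕ u₁) W(y₁ | u₁). Then the Bhattacharyya parameter of W⁺ satisfies Z(W⁺) = Z(W)², where Z(W⁺) = Σ_{y₀,y₁,u₀} √(W⁺(y₀,y₁,u₀|0) · W⁺(y₀,y₁,u₀|1)). -/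
/-!
Since `u₀ ↦ u₀ + 1` only swaps the two inputs, `W(y₀ ∣ u₀) W(y₀ ∣ u₀ + 1) = W(y₀ ∣ 0) W(y₀ ∣ 1)` for
both values of `u₀`, so every summand of `Z(W⁺)` factors as
`½ √(W(y₀∣0) W(y₀∣1)) √(W(y₁∣0) W(y₁∣1))`. The two values of `u₀` cancel the `½`, and the double
sum over `(y₀, y₁)` of the remaining product is `Z(W)²`.
-/

open Finset

lemma ZMod.apply_add_zero_mul_apply_add_one {M : Type*} [CommMonoid M]
    (f : ZMod 2 → M) (u : ZMod 2) : f (u + 0) * f (u + 1) = f 0 * f 1 := by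
  fin_cases u
  · rfl
  · exact mul_comm _ _

lemma Real.sqrt_half_mul_mul_half_mul {a b c d : ℝ} (hac : 0 ≤ a * c) :
    √((1 / 2 * a * b) * (1 / 2 * c * d)) = 1 / 2 * (√(a * c) * √(b * d)) := by
  have hsqrt_quarter : √(1 / 4 : ℝ) = 1 / 2 := by
    rw [show (1 / 4 : ℝ) = (1 / 2) ^ 2 by norm_num, Real.sqrt_sq (by norm_num)]
  rw [show (1 / 2 * a * b) * (1 / 2 * c * d) = 1 / 4 * ((a * c) * (b * d)) by ring,
    Real.sqrt_mul (by norm_num), hsqrt_quarter, Real.sqrt_mul hac]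

theorem bhattacharyya_plus_eq_sq_general
    {Y : Type*} [Fintype Y] (W : ZMod 2 → Y → ℝ)
    (hW : ∀ x y, 0 ≤ W x y) :
    ∑ y₀ : Y, ∑ y₁ : Y, ∑ u₀ : ZMod 2,
        Real.sqrt ((1 / 2 * W (u₀ + 0) y₀ * W 0 y₁) * (1 / 2 * W (u₀ + 1) y₀ * W 1 y₁))
      = (∑ y : Y, Real.sqrt (W 0 y * W 1 y)) ^ 2 := by
  have hsummand : ∀ (y₀ y₁ : Y) (u₀ : ZMod 2),
      √((1 / 2 * W (u₀ + 0) y₀ * W 0 y₁) * (1 / 2 * W (u₀ + 1) y₀ * W 1 y₁))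
        = 1 / 2 * (√(W 0 y₀ * W 1 y₀) * √(W 0 y₁ * W 1 y₁)) := fun y₀ y₁ u₀ => by
    rw [Real.sqrt_half_mul_mul_half_mul (mul_nonneg (hW _ y₀) (hW _ y₀)),
      ZMod.apply_add_zero_mul_apply_add_one (W · y₀)]
  calc _ = ∑ y₀ : Y, ∑ y₁ : Y, √(W 0 y₀ * W 1 y₀) * √(W 0 y₁ * W 1 y₁) := by
        simp only [hsummand, sum_const, card_univ, ZMod.card, nsmul_eq_mul]
        exact sum_congr rfl fun _ _ => sum_congr rfl fun _ _ => by ring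
    _ = _ := by rw [sq, sum_mul_sum]

/-- **`Z(W⁺) = Z(W)²`.**  For a binary-input channel `W` and the polarized channel
`W⁺(y₀,y₁,u₀ ∣ u₁) = (1/2)·W(y₀ ∣ u₀ ⊕ u₁)·W(y₁ ∣ u₁)`, the Bhattacharyya parameter of
`W⁺` is the square of that of `W`. -/
theorem bhattacharyya_plus_eq_sq
    {Y : Type*} [Fintype Y] (W : ZMod 2 → Y → ℝ)
    (hW : ∀ x y, 0 ≤ W x y) (hsum : ∀ x, ∑ y, W x y = 1) :
    ∑ y₀ : Y, ∑ y₁ : Y, ∑ u₀ : ZMod 2,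
        Real.sqrt ((1 / 2 * W (u₀ + 0) y₀ * W 0 y₁) * (1 / 2 * W (u₀ + 1) y₀ * W 1 y₁))
      = (∑ y : Y, Real.sqrt (W 0 y * W 1 y)) ^ 2 :=
  bhattacharyya_plus_eq_sq_general W hW
end
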